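/- arXiv:0901.2451 — 3 statements merged into one kernel-verified Lean document; each statement's English description precedes it below -/
import Mathlib

section
/- Let (R, A) be network data such that the static planning problem has optimal objective value 1 and the dual problem has a unique optimal solution (y*, z*). Then max_{a∈𝒜} Σ_{i∈ℐ} Σ_{j∈𝒥} y*_i R_{ij} a_j = 0; that is, no allocation achieves a positive workload depletion rate. -/
open Finset

section Network

variable {I J K : Type*} [Fintype I] [Fintype J] [Fintype K] [DecidableEq J] [DecidableEq K]

/-- Assumptions on the capacity consumption matrix `A`: entries in `{0,1}`;
input processors only work on input activities and service processors only on
service activities; every activity uses some processor.  Here `JI` is the set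
of input activities (service activities are its complement) and `KI` the set
of input processors (service processors are its complement). -/
def NetData (A : K → J → ℝ) (JI : Finset J) (KI : Finset K) : Prop :=
  (∀ k j, A k j = 0 ∨ A k j = 1) ∧
  (∀ k j, ((k ∈ KI ∧ j ∉ JI) ∨ (k ∉ KI ∧ j ∈ JI)) → A k j = 0) ∧
  (∀ j, ∃ k, A k j = 1)

/-- The allocation set `𝒜`. -/
def Alloc (A : K → J → ℝ) (KI : Finset K) : Set (J → ℝ) :=
  {a | (∀ j, 0 ≤ a j) ∧ (∀ k, ∑ j, A k j * a j ≤ 1) ∧ ∀ k ∈ KI, ∑ j, A k j * a j = 1}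

/-- Feasibility for the static planning problem. -/
def SPPfeas (R : I → J → ℝ) (A : K → J → ℝ) (KI : Finset K) (ρ : ℝ) (x : J → ℝ) : Prop :=
  (∀ i, ∑ j, R i j * x j = 0) ∧ (∀ k ∈ KI, ∑ j, A k j * x j = 1) ∧
  (∀ k, k ∉ KI → ∑ j, A k j * x j ≤ ρ) ∧ (∀ j, 0 ≤ x j)

/-- Optimality for the static planning problem (minimize `ρ`). -/
def SPPopt (R : I → J → ℝ) (A : K → J → ℝ) (KI : Finset K) (ρ : ℝ) (x : J → ℝ) : Prop :=
  SPPfeas R A KI ρ x ∧ ∀ ρ' x', SPPfeas R A KI ρ' x' → ρ ≤ ρ'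

/-- Unique optimality for the static planning problem. -/
def SPPuniqueOpt (R : I → J → ℝ) (A : K → J → ℝ) (KI : Finset K) (ρ : ℝ) (x : J → ℝ) : Prop :=
  SPPopt R A KI ρ x ∧ ∀ ρ' x', SPPopt R A KI ρ' x' → ρ' = ρ ∧ x' = x

/-- Feasibility for the dual of the static planning problem. -/
def Dfeas (R : I → J → ℝ) (A : K → J → ℝ) (JI : Finset J) (KI : Finset K)
    (y : I → ℝ) (z : K → ℝ) : Prop :=
  (∀ j ∈ JI, ∑ i, y i * R i j ≤ - ∑ k ∈ KI, z k * A k j) ∧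
  (∀ j, j ∉ JI → ∑ i, y i * R i j ≤ ∑ k ∈ KIᶜ, z k * A k j) ∧
  (∑ k ∈ KIᶜ, z k = 1) ∧ (∀ k, k ∉ KI → 0 ≤ z k)

/-- Optimality for the dual problem (maximize `∑_{k ∈ KI} z k`). -/
def Dopt (R : I → J → ℝ) (A : K → J → ℝ) (JI : Finset J) (KI : Finset K)
    (y : I → ℝ) (z : K → ℝ) : Prop :=
  Dfeas R A JI KI y z ∧
    ∀ y' z', Dfeas R A JI KI y' z' → ∑ k ∈ KI, z' k ≤ ∑ k ∈ KI, z k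

/-- Unique optimality for the dual problem. -/
def DuniqueOpt (R : I → J → ℝ) (A : K → J → ℝ) (JI : Finset J) (KI : Finset K)
    (y : I → ℝ) (z : K → ℝ) : Prop :=
  Dopt R A JI KI y z ∧ ∀ y' z', Dopt R A JI KI y' z' → y' = y ∧ z' = z

end Network

/-- The lifting vector `ζ^α` determined by `α` and the dual optimum `y`. -/
noncomputable def zeta {I : Type*} [Fintype I] (α y : I → ℝ) : I → ℝ :=
  fun i => (y i / α i) / ∑ i', (y i') ^ 2 / α i'

/-- A fluid model solution under the maximum pressure policy with parameter `α`. -/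
def FluidSol {I J K : Type*} [Fintype I] [Fintype J] [Fintype K] [DecidableEq J] [DecidableEq K]
    (R : I → J → ℝ) (A : K → J → ℝ) (KI : Finset K) (α : I → ℝ)
    (Z : ℝ → I → ℝ) (T : ℝ → J → ℝ) : Prop :=
  (∀ t, 0 ≤ t → ∀ i, Z t i = Z 0 i - ∑ j, R i j * T t j) ∧
  (∀ t, 0 ≤ t → ∀ i, 0 ≤ Z t i) ∧
  (∀ s t, 0 ≤ s → s ≤ t → ∀ k ∈ KI, ∑ j, A k j * (T t j - T s j) = t - s) ∧
  (∀ s t, 0 ≤ s → s ≤ t → ∀ k, ∑ j, A k j * (T t j - T s j) ≤ t - s) ∧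
  (∀ s t, 0 ≤ s → s ≤ t → ∀ j, T s j ≤ T t j) ∧
  (∀ j, T 0 j = 0) ∧
  (∀ t, 0 < t → ∀ (Z' : I → ℝ) (T' : J → ℝ),
    (∀ i, HasDerivAt (fun s => Z s i) (Z' i) t) →
    (∀ j, HasDerivAt (fun s => T s j) (T' j) t) →
    ∑ i, α i * Z t i * ∑ j, R i j * T' j =
      sSup ((fun a => ∑ i, α i * Z t i * ∑ j, R i j * a j) '' Alloc A KI))


/-!
The maximum is at least `0`: an optimal solution `x` of the static planning problem at `ρ = 1`
is itself an allocation, and `R x = 0`. For the upper bound, once the block structure of `A` is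
used, dual feasibility of `(y*, z*)` reads `y* R ≤ ẑ A` with `ẑ = z*` on service processors and
`ẑ = -z*` on input processors; pairing with an allocation `a ≥ 0` bounds `y* R a` by
`1 - ∑_{k ∈ 𝒦_I} z*_k`. That dual optimal value is at least the primal value `1` by strong
duality, which follows from Farkas' lemma: if it were smaller, a Farkas certificate for the
infeasible primal system would push `(y*, z*)` to a feasible point with a larger objective.
-/

open Matrix

theorem farkas_finset {ι n : Type*} [Fintype n] [DecidableEq ι] (s : Finset ι)
    (f : ι → n → ℝ) (b : n → ℝ) :
    (∃ c : ι → ℝ, 0 ≤ c ∧ ∑ i ∈ s, c i • f i = b) ∨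
      ∃ p : n → ℝ, (∀ i ∈ s, 0 ≤ p ⬝ᵥ f i) ∧ p ⬝ᵥ b < 0 := by
  induction s using Finset.induction_on generalizing f b with
  | empty =>
    by_cases hb : b = 0
    · exact Or.inl ⟨0, le_rfl, by simp [hb]⟩
    · refine Or.inr ⟨-b, by simp, ?_⟩
      simpa using dotProduct_star_self_pos_iff.mpr hb
  | insert v s hv ih =>
    rcases ih f b with ⟨c, hc, hcb⟩ | ⟨p, hp, hpb⟩
    · refine Or.inl ⟨Function.update c v 0, le_update_iff.mpr ⟨le_rfl, fun j _ => hc j⟩, ?_⟩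
      rw [sum_insert hv, Function.update_self, zero_smul, zero_add, ← hcb]
      exact sum_congr rfl fun i hi => by rw [Function.update_of_ne (ne_of_mem_of_not_mem hi hv)]
    by_cases hpv : 0 ≤ p ⬝ᵥ f v
    · exact Or.inr ⟨p, forall_mem_insert _ _ _ |>.mpr ⟨hpv, hp⟩, hpb⟩
    push Not at hpv
    set α := p ⬝ᵥ f v
    -- Project along `f v` onto the hyperplane `p ⬝ᵥ w = 0` and apply the induction hypothesis there.
    set π : (n → ℝ) → n → ℝ := fun w => w - (p ⬝ᵥ w / α) • f v with hπ
    rcases ih (π ∘ f) (π b) with ⟨c, hc, hcb⟩ | ⟨q, hq, hqb⟩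
    · set μ := p ⬝ᵥ b / α - ∑ i ∈ s, c i * (p ⬝ᵥ f i / α)
      have hμ : 0 ≤ μ := by
        have hb : 0 ≤ p ⬝ᵥ b / α := div_nonneg_of_nonpos hpb.le hpv.le
        have hf : ∑ i ∈ s, c i * (p ⬝ᵥ f i / α) ≤ 0 :=
          sum_nonpos fun i hi => mul_nonpos_of_nonneg_of_nonpos (hc i)
            (div_nonpos_of_nonneg_of_nonpos (hp i hi) hpv.le)
        linarith
      refine Or.inl ⟨Function.update c v μ, le_update_iff.mpr ⟨hμ, fun j _ => hc j⟩, ?_⟩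
      have hsum : ∑ i ∈ s, Function.update c v μ i • f i = ∑ i ∈ s, c i • f i :=
        sum_congr rfl fun i hi => by rw [Function.update_of_ne (ne_of_mem_of_not_mem hi hv)]
      simp only [Function.comp_apply, hπ, smul_sub, smul_smul, sum_sub_distrib, ← sum_smul] at hcb
      rw [sum_insert hv, Function.update_self, hsum]
      linear_combination (norm := module) hcb
    · set r := q - (q ⬝ᵥ f v / α) • p
      have hr : ∀ w, r ⬝ᵥ w = q ⬝ᵥ π w := fun w => by
        simp only [r, hπ, sub_dotProduct, dotProduct_sub, smul_dotProduct, dotProduct_smul,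
          smul_eq_mul]
        rw [dotProduct_comm q (f v)]
        ring
      refine Or.inr ⟨r, forall_mem_insert _ _ _ |>.mpr ⟨?_, fun i hi => ?_⟩, by rwa [hr]⟩
      · simp [hr, hπ, α, hpv.ne]
      · rw [hr]
        exact hq i hi

theorem farkas_matrix {m n : Type*} [Fintype m] [Fintype n] (M : Matrix m n ℝ) (b : m → ℝ) :
    (∃ x : n → ℝ, 0 ≤ x ∧ M *ᵥ x = b) ∨ ∃ p : m → ℝ, 0 ≤ p ᵥ* M ∧ p ⬝ᵥ b < 0 := by
  classical
  refine (farkas_finset univ Mᵀ b).imp (fun ⟨x, hx, hxb⟩ => ⟨x, hx, ?_⟩)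
    fun ⟨p, hp, hpb⟩ => ⟨p, fun j => hp j (mem_univ j), hpb⟩
  rw [← hxb]
  ext i
  simp [mulVec, dotProduct, Finset.sum_apply, mul_comm]

theorem farkas_mixed {m n : Type*} [Fintype m] [Fintype n] (M : Matrix m n ℝ) (b : m → ℝ)
    (E : Set m) :
    (∃ x : n → ℝ, 0 ≤ x ∧ (∀ i ∈ E, (M *ᵥ x) i = b i) ∧ ∀ i ∉ E, (M *ᵥ x) i ≤ b i) ∨
      ∃ p : m → ℝ, (∀ i ∉ E, 0 ≤ p i) ∧ 0 ≤ p ᵥ* M ∧ p ⬝ᵥ b < 0 := by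
  classical
  set slack : m → ℝ := Eᶜ.indicator 1
  rcases farkas_matrix (fromCols M (diagonal slack)) b with ⟨x, hx, hxb⟩ | ⟨p, hp, hpb⟩
  · refine Or.inl ⟨x ∘ Sum.inl, fun j => hx _, fun i hi => ?_, fun i hi => ?_⟩
    · simp [← hxb, mulVec_diagonal, slack, hi]
    · simpa [← hxb, mulVec_diagonal, slack, hi] using hx (Sum.inr i)
  · refine Or.inr ⟨p, fun i hi => ?_, fun j => ?_, hpb⟩
    · simpa [vecMul_diagonal, slack, hi] using hp (Sum.inr i)
    · simpa using hp (Sum.inl j)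

theorem sum_sum_mul_eq_dotProduct_mulVec {m n : Type*} [Fintype m] [Fintype n]
    (y : m → ℝ) (M : Matrix m n ℝ) (a : n → ℝ) :
    ∑ i, ∑ j, y i * M i j * a j = y ⬝ᵥ (M *ᵥ a) := by
  simp [dotProduct, mulVec, mul_sum, mul_assoc]

def IsBlockDiagonal {J K : Type*} (A : Matrix K J ℝ) (JI : Finset J) (KI : Finset K) : Prop :=
  ∀ k j, (k ∈ KI ∧ j ∉ JI ∨ k ∉ KI ∧ j ∈ JI) → A k j = 0

def negOn {K : Type*} [DecidableEq K] (s : Finset K) (z : K → ℝ) : K → ℝ :=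
  fun k => if k ∈ s then -z k else z k

section Primal

variable {I J K : Type*} [Fintype J] {R : Matrix I J ℝ} {A : Matrix K J ℝ} {KI : Finset K}
  {ρ : ℝ} {x : J → ℝ}

theorem SPPfeas.mem_alloc (hx : SPPfeas R A KI ρ x) (hρ : ρ ≤ 1) : x ∈ Alloc A KI :=
  ⟨hx.2.2.2, fun k => (em (k ∈ KI)).elim (fun hk => (hx.2.1 k hk).le)
    fun hk => (hx.2.2.1 k hk).trans hρ, hx.2.1⟩

theorem SPPfeas.dotProduct_mulVec_eq_zero [Fintype I] (hx : SPPfeas R A KI ρ x) (y : I → ℝ) :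
    y ⬝ᵥ (R *ᵥ x) = 0 := by
  rw [show R *ᵥ x = 0 from funext hx.1, dotProduct_zero]

end Primal

section Dual

variable {I J K : Type*} [Fintype I] [Fintype K] [DecidableEq K]
  {R : Matrix I J ℝ} {A : Matrix K J ℝ} {JI : Finset J} {KI : Finset K}

theorem sppFeas_or_exists_dual_certificate [Fintype J] (R : Matrix I J ℝ) (A : Matrix K J ℝ)
    (KI : Finset K) (ρ : ℝ) :
    (∃ x, SPPfeas R A KI ρ x) ∨ ∃ (y : I → ℝ) (q : K → ℝ), (∀ k ∉ KI, 0 ≤ q k) ∧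
      y ᵥ* R ≤ q ᵥ* A ∧ ∑ k ∈ KI, q k + ρ * ∑ k ∈ KIᶜ, q k < 0 := by
  rcases farkas_mixed (fromRows R A) (Sum.elim 0 fun k => if k ∈ KI then 1 else ρ)
      (Set.range Sum.inl ∪ Sum.inr '' KI) with ⟨x, hx, heq, hle⟩ | ⟨p, hp, hpM, hpb⟩
  · refine Or.inl ⟨x, fun i => ?_, fun k hk => ?_, fun k hk => ?_, hx⟩
    · simpa [mulVec, dotProduct] using heq (Sum.inl i) (by simp)
    · simpa [mulVec, dotProduct, hk] using heq (Sum.inr k) (by simp [hk])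
    · simpa [mulVec, dotProduct, hk] using hle (Sum.inr k) (by simp [hk])
  · refine Or.inr ⟨-(p ∘ Sum.inl), p ∘ Sum.inr, fun k hk => hp _ (by simp [hk]), ?_, ?_⟩
    · rw [neg_vecMul, neg_le_iff_add_nonneg]
      simpa [add_comm] using hpM
    · simp only [dotProduct, Fintype.sum_sum_type, Sum.elim_inl, Sum.elim_inr, Pi.zero_apply,
        mul_zero, sum_const_zero, zero_add] at hpb
      rw [← sum_add_sum_compl KI] at hpb
      simpa [mul_sum, mul_comm, sum_ite_of_true, sum_ite_of_false] using hpb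

theorem negOn_vecMul_of_mem (hA : IsBlockDiagonal A JI KI) (z : K → ℝ) {j : J} (hj : j ∈ JI) :
    (negOn KI z ᵥ* A) j = -∑ k ∈ KI, z k * A k j := by
  rw [vecMul, dotProduct, ← sum_add_sum_compl KI]
  rw [sum_eq_zero (s := KIᶜ) fun k hk => ?_, add_zero]
  · simp +contextual [negOn, sum_neg_distrib]
  · rw [hA k j (Or.inr ⟨mem_compl.mp hk, hj⟩), mul_zero]

theorem negOn_vecMul_of_notMem (hA : IsBlockDiagonal A JI KI) (z : K → ℝ) {j : J}
    (hj : j ∉ JI) : (negOn KI z ᵥ* A) j = ∑ k ∈ KIᶜ, z k * A k j := by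
  rw [vecMul, dotProduct, ← sum_add_sum_compl KI]
  rw [sum_eq_zero fun k hk => ?_, zero_add]
  · exact sum_congr rfl fun k hk => by simp [negOn, mem_compl.mp hk]
  · rw [hA k j (Or.inl ⟨hk, hj⟩), mul_zero]

theorem dfeas_iff (hA : IsBlockDiagonal A JI KI) (y : I → ℝ) (z : K → ℝ) :
    Dfeas R A JI KI y z ↔
      y ᵥ* R ≤ negOn KI z ᵥ* A ∧ ∑ k ∈ KIᶜ, z k = 1 ∧ ∀ k ∉ KI, 0 ≤ z k := by
  have hle : y ᵥ* R ≤ negOn KI z ᵥ* A ↔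
      (∀ j ∈ JI, ∑ i, y i * R i j ≤ -∑ k ∈ KI, z k * A k j) ∧
        ∀ j ∉ JI, ∑ i, y i * R i j ≤ ∑ k ∈ KIᶜ, z k * A k j := by
    refine ⟨fun h => ⟨fun j hj => ?_, fun j hj => ?_⟩, fun ⟨h₁, h₂⟩ j => ?_⟩
    · rw [← negOn_vecMul_of_mem hA z hj]
      exact h j
    · rw [← negOn_vecMul_of_notMem hA z hj]
      exact h j
    · by_cases hj : j ∈ JI
      · rw [negOn_vecMul_of_mem hA z hj]
        exact h₁ j hj
      · rw [negOn_vecMul_of_notMem hA z hj]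
        exact h₂ j hj
  rw [hle]
  exact and_assoc.symm

theorem dotProduct_mulVec_le_of_dfeas [Fintype J] (hA : IsBlockDiagonal A JI KI)
    {y : I → ℝ} {z : K → ℝ} (hyz : Dfeas R A JI KI y z) {a : J → ℝ} (ha : a ∈ Alloc A KI) :
    y ⬝ᵥ (R *ᵥ a) ≤ 1 - ∑ k ∈ KI, z k := by
  obtain ⟨hyR, hz1, hz0⟩ := (dfeas_iff hA y z).mp hyz
  obtain ⟨ha0, haK, haKI⟩ := ha
  calc y ⬝ᵥ (R *ᵥ a) = (y ᵥ* R) ⬝ᵥ a := dotProduct_mulVec y R a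
    _ ≤ (negOn KI z ᵥ* A) ⬝ᵥ a := dotProduct_le_dotProduct_of_nonneg_right hyR ha0
    _ = negOn KI z ⬝ᵥ (A *ᵥ a) := (dotProduct_mulVec _ A a).symm
    _ = -∑ k ∈ KI, z k + ∑ k ∈ KIᶜ, z k * (A *ᵥ a) k := by
      rw [dotProduct, ← sum_add_sum_compl KI, ← sum_neg_distrib]
      congr 1 <;> refine sum_congr rfl fun k hk => ?_
      · simp [negOn, hk, show (A *ᵥ a) k = 1 from haKI k hk]
      · simp [negOn, mem_compl.mp hk]
    _ ≤ -∑ k ∈ KI, z k + ∑ k ∈ KIᶜ, z k := by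
      gcongr with k hk
      exact mul_le_of_le_one_right (hz0 k (mem_compl.mp hk)) (haK k)
    _ = 1 - ∑ k ∈ KI, z k := by
      rw [hz1]
      ring

theorem exists_dfeas_sum_gt (hA : IsBlockDiagonal A JI KI) {y : I → ℝ} {z : K → ℝ}
    (hyz : Dfeas R A JI KI y z) {y' : I → ℝ} {q : K → ℝ} (hq : ∀ k ∉ KI, 0 ≤ q k)
    (hy'q : y' ᵥ* R ≤ q ᵥ* A) (hobj : ∑ k ∈ KI, q k + (∑ k ∈ KI, z k) * ∑ k ∈ KIᶜ, q k < 0) :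
    ∃ y'' z'', Dfeas R A JI KI y'' z'' ∧ ∑ k ∈ KI, z k < ∑ k ∈ KI, z'' k := by
  obtain ⟨hyR, hz1, hz0⟩ := (dfeas_iff hA y z).mp hyz
  set σ := ∑ k ∈ KIᶜ, q k
  have hσ : 0 ≤ σ := sum_nonneg fun k hk => hq k (mem_compl.mp hk)
  have hs : 0 < 1 + σ := by positivity
  -- `(y + y', z + negOn KI q)` satisfies the homogeneous dual constraints with service sum `1 + σ`.
  refine ⟨(1 + σ)⁻¹ • (y + y'), (1 + σ)⁻¹ • (z + negOn KI q),
    (dfeas_iff hA _ _).mpr ⟨?_, ?_, fun k hk => ?_⟩, ?_⟩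
  · have hneg : negOn KI ((1 + σ)⁻¹ • (z + negOn KI q)) = (1 + σ)⁻¹ • (negOn KI z + q) := by
      ext k
      by_cases hk : k ∈ KI <;> simp [negOn, hk]
      ring
    rw [hneg, smul_vecMul, smul_vecMul, add_vecMul, add_vecMul]
    exact smul_le_smul_of_nonneg_left (add_le_add hyR hy'q) (by positivity)
  · have hqσ : ∑ k ∈ KIᶜ, negOn KI q k = σ :=
      sum_congr rfl fun k hk => if_neg (mem_compl.mp hk)
    simp only [Pi.smul_apply, Pi.add_apply, smul_eq_mul, ← mul_sum, sum_add_distrib, hz1, hqσ]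
    exact inv_mul_cancel₀ hs.ne'
  · simp only [Pi.smul_apply, Pi.add_apply, smul_eq_mul, negOn, if_neg hk]
    exact mul_nonneg (by positivity) (add_nonneg (hz0 k hk) (hq k hk))
  · have hqKI : ∑ k ∈ KI, negOn KI q k = -∑ k ∈ KI, q k := by
      rw [← sum_neg_distrib]
      exact sum_congr rfl fun k hk => if_pos hk
    simp only [Pi.smul_apply, Pi.add_apply, smul_eq_mul, ← mul_sum, sum_add_distrib, hqKI]
    rw [← div_eq_inv_mul, lt_div_iff₀ hs]
    linarith

theorem SPPopt.le_sum_of_dopt [Fintype J] (hA : IsBlockDiagonal A JI KI) {ρ : ℝ} {x : J → ℝ}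
    (hx : SPPopt R A KI ρ x) {y : I → ℝ} {z : K → ℝ} (hyz : Dopt R A JI KI y z) :
    ρ ≤ ∑ k ∈ KI, z k := by
  by_contra! hlt
  rcases sppFeas_or_exists_dual_certificate R A KI (∑ k ∈ KI, z k) with
    ⟨x', hx'⟩ | ⟨y', q, hq, hy'q, hobj⟩
  · exact (hx.2 _ x' hx').not_gt hlt
  · obtain ⟨y'', z'', hfeas, hgt⟩ := exists_dfeas_sum_gt hA hyz.1 hq hy'q hobj
    exact (hyz.2 y'' z'' hfeas).not_gt hgt

end Dual

theorem no_positive_depletion_general {I J K : Type*} [Fintype I] [Fintype J] [Fintype K] [DecidableEq K]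
    (R : I → J → ℝ) (A : K → J → ℝ) (JI : Finset J) (KI : Finset K)
    (hND : NetData A JI KI)
    (hSPP : ∃ x, SPPopt R A KI 1 x)
    (ystar : I → ℝ) (zstar : K → ℝ) (hD : DuniqueOpt R A JI KI ystar zstar) :
    IsGreatest ((fun a => ∑ i, ∑ j, ystar i * R i j * a j) '' Alloc A KI) 0 := by
  obtain ⟨x, hx⟩ := hSPP
  have hA : IsBlockDiagonal A JI KI := hND.2.1
  have hval : 1 ≤ ∑ k ∈ KI, zstar k := hx.le_sum_of_dopt hA hD.1
  refine ⟨⟨x, hx.1.mem_alloc le_rfl,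
    (sum_sum_mul_eq_dotProduct_mulVec ystar R x).trans (hx.1.dotProduct_mulVec_eq_zero ystar)⟩, ?_⟩
  rintro _ ⟨a, ha, rfl⟩
  calc ∑ i, ∑ j, ystar i * R i j * a j = ystar ⬝ᵥ (R *ᵥ a) :=
        sum_sum_mul_eq_dotProduct_mulVec ystar R a
    _ ≤ 1 - ∑ k ∈ KI, zstar k := dotProduct_mulVec_le_of_dfeas hA hD.1.1 ha
    _ ≤ 0 := by linarith

/-- Equation (6.12): when the network is critically loaded (`ρ = 1`),
no allocation achieves a positive workload depletion rate, and the maximal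
rate `max_{a ∈ 𝒜} y* ⬝ R a` equals `0`. -/
theorem no_positive_depletion {I J K : Type*} [Fintype I] [Fintype J] [Fintype K] [DecidableEq J] [DecidableEq K]
    (R : I → J → ℝ) (A : K → J → ℝ) (JI : Finset J) (KI : Finset K)
    (hND : NetData A JI KI)
    (hSPP : ∃ x, SPPopt R A KI 1 x)
    (ystar : I → ℝ) (zstar : K → ℝ) (hD : DuniqueOpt R A JI KI ystar zstar) :
    IsGreatest ((fun a => ∑ i, ∑ j, ystar i * R i j * a j) '' Alloc A KI) 0 :=
  no_positive_depletion_general R A JI KI hND hSPP ystar zstar hD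
end

section
/- Let ℐ be a finite index set of size I ≥ 1, c ∈ ℝ^ℐ with c_i > 0 for all i, and y* ∈ ℝ^ℐ with y* ≥ 0, y* ≠ 0. Let ι be an index with y*_ι > 0 minimizing c_i/y*_i over {i : y*_i > 0}. Given ε > 0, define α ∈ ℝ^ℐ by α_ι = c_ι y*_ι ε/(I · max_i (c_i y*_i)) and α_i = 1 for i ≠ ι, and let ζ^α_i = (y*_i/α_i)/(Σ_{i'} (y*_{i'})²/α_{i'}). Then c_i ζ^α_i ≤ c_ι ε/(y*_ι I) for every i ≠ ι, c_ι ζ^α_ι ≤ c_ι/y*_ι, and consequently Σ_i c_i ζ^α_i ≤ (c_ι/y*_ι)(1 + ε). -/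
/-
Since every `α i` is positive, the normalising sum `S = ∑ y_i² / α_i` is at least its `ι`-term
`y_ι² / α_ι`, so `c * ζ^α_i = c * (y_i / α_i) / S ≤ M * α_ι / y_ι²` whenever `c * (y_i / α_i) ≤ M`.
For `i = ι` with `M = c_ι y_ι / α_ι` this gives `c_ι ζ^α_ι ≤ c_ι / y_ι`; for `i ≠ ι` (where
`α_i = 1`) with `M = max_i c_i y_i` the choice of `α_ι` makes `M * α_ι / y_ι²` equal to
`c_ι ε / (y_ι I)`. Summing the `I - 1` small terms costs at most `c_ι ε / y_ι`.
-/

open Finset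

section Zeta

variable {I : Type*} [Fintype I] {α y : I → ℝ}

theorem sq_div_le_sum_sq_div (hα : ∀ i, 0 < α i) (j : I) :
    y j ^ 2 / α j ≤ ∑ i, y i ^ 2 / α i :=
  single_le_sum (fun i _ => div_nonneg (sq_nonneg (y i)) (hα i).le) (mem_univ j)

theorem mul_zeta_le (hα : ∀ i, 0 < α i) {j : I} (hj : 0 < y j) {c M : ℝ} (hM : 0 ≤ M)
    {i : I} (hi : c * (y i / α i) ≤ M) :
    c * zeta α y i ≤ M * α j / y j ^ 2 := by
  have hjterm : 0 < y j ^ 2 / α j := div_pos (pow_pos hj 2) (hα j)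
  have hS := sq_div_le_sum_sq_div (y := y) hα j
  calc c * zeta α y i = c * (y i / α i) / ∑ i', y i' ^ 2 / α i' := mul_div_assoc' ..
    _ ≤ M / ∑ i', y i' ^ 2 / α i' := div_le_div_of_nonneg_right hi (hjterm.trans_le hS).le
    _ ≤ M / (y j ^ 2 / α j) := div_le_div_of_nonneg_left hM hjterm hS
    _ = M * α j / y j ^ 2 := by rw [div_div_eq_mul_div]

end Zeta

theorem sum_le_add_card_mul_of_ne {I : Type*} [Fintype I] [DecidableEq I] {f : I → ℝ} (j : I)
    {a b : ℝ} (hj : f j ≤ a) (hb : 0 ≤ b) (hne : ∀ i, i ≠ j → f i ≤ b) :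
    ∑ i, f i ≤ a + Fintype.card I * b := by
  rw [← add_sum_erase univ f (mem_univ j)]
  refine add_le_add hj ((sum_le_card_nsmul _ _ b fun i hi => hne i (ne_of_mem_erase hi)).trans ?_)
  rw [nsmul_eq_mul]
  gcongr
  exact_mod_cast card_le_card (erase_subset j univ)

open Finset in
theorem eps_optimal_alpha_cost_general {I : Type*} [Fintype I] [Nonempty I]
    (c ystar : I → ℝ) (hc : ∀ i, 0 < c i)
    (ι : I) (hι : 0 < ystar ι)
    (ε : ℝ) (hε : 0 < ε)
    (α : I → ℝ)
    (hαι : α ι = c ι * ystar ι * ε /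
      ((Fintype.card I : ℝ) * univ.sup' univ_nonempty fun i => c i * ystar i))
    (hαother : ∀ i, i ≠ ι → α i = 1) :
    (∀ i, i ≠ ι → c i * zeta α ystar i ≤ c ι * ε / (ystar ι * (Fintype.card I : ℝ))) ∧
    c ι * zeta α ystar ι ≤ c ι / ystar ι ∧
    ∑ i, c i * zeta α ystar i ≤ c ι / ystar ι * (1 + ε) := by
  classical
  set M := univ.sup' univ_nonempty fun i => c i * ystar i
  have hM : ∀ i, c i * ystar i ≤ M := fun i => le_sup' (fun j => c j * ystar j) (mem_univ i)
  have hMpos : 0 < M := (mul_pos (hc ι) hι).trans_le (hM ι)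
  have hcard : (0 : ℝ) < Fintype.card I := by exact_mod_cast Fintype.card_pos
  have hα : ∀ i, 0 < α i := fun i => by
    by_cases h : i = ι
    · rw [h, hαι]; exact div_pos (by have := hc ι; positivity) (mul_pos hcard hMpos)
    · rw [hαother i h]; exact one_pos
  have hother : ∀ i, i ≠ ι → c i * zeta α ystar i ≤ c ι * ε / (ystar ι * Fintype.card I) := by
    intro i hi
    have := mul_zeta_le hα hι hMpos.le (c := c i) (by rw [hαother i hi, div_one]; exact hM i)
    convert this using 1
    rw [hαι]; field_simp
  have hself : c ι * zeta α ystar ι ≤ c ι / ystar ι := by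
    have hMι : 0 ≤ c ι * (ystar ι / α ι) := (mul_pos (hc ι) (div_pos hι (hα ι))).le
    convert mul_zeta_le hα hι hMι le_rfl using 1
    field_simp [(hα ι).ne']
  refine ⟨hother, hself, ?_⟩
  calc ∑ i, c i * zeta α ystar i
      ≤ c ι / ystar ι + Fintype.card I * (c ι * ε / (ystar ι * Fintype.card I)) :=
        sum_le_add_card_mul_of_ne ι hself (by have := hc ι; positivity) hother
    _ = c ι / ystar ι * (1 + ε) := by field_simp

open Finset in
/-- The computation in the proof of Theorem 7: for the particular parameter `α`
used there, the linear cost of the lifted state is within a factor `1 + ε` of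
the lower bound `c_ι / y*_ι`. -/
theorem eps_optimal_alpha_cost {I : Type*} [Fintype I] [Nonempty I]
    (c ystar : I → ℝ) (hc : ∀ i, 0 < c i) (hynn : ∀ i, 0 ≤ ystar i)
    (hy0 : ystar ≠ 0)
    (ι : I) (hι : 0 < ystar ι)
    (hιmin : ∀ i, 0 < ystar i → c ι / ystar ι ≤ c i / ystar i)
    (ε : ℝ) (hε : 0 < ε)
    (α : I → ℝ)
    (hαι : α ι = c ι * ystar ι * ε /
      ((Fintype.card I : ℝ) * univ.sup' univ_nonempty fun i => c i * ystar i))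
    (hαother : ∀ i, i ≠ ι → α i = 1) :
    (∀ i, i ≠ ι → c i * zeta α ystar i ≤ c ι * ε / (ystar ι * (Fintype.card I : ℝ))) ∧
    c ι * zeta α ystar ι ≤ c ι / ystar ι ∧
    ∑ i, c i * zeta α ystar i ≤ c ι / ystar ι * (1 + ε) :=
  eps_optimal_alpha_cost_general c ystar hc ι hι ε hε α hαι hαother
end

section
/- Consider a sequence of network data (R^r, A), r ∈ ℕ, and limit data (R, A), sharing the same index sets and consumption matrix A, with R^r → R entrywise. Assume: the static planning problem for (R, A) has a unique optimal solution (ρ*, x*) with ρ* = 1; for each r the dual problem for (R^r, A) has a unique optimal solution (y^r, z^r), which is nonnegative; and the dual problem for (R, A) has a unique optimal solution (y*, z*), which is nonnegative. Then the sequence (y^r)_{r∈ℕ} is bounded in ℝ^ℐ. -/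
/-! If the `y^r` were unbounded, a subsequence of the directions `y^r / ‖y^r‖` would converge to a
unit vector `u`. The dual constraints of `(R^r, A)` have right-hand sides at most `1` (as `z^r ≥ 0`
and `A` is a `0`-`1` matrix), so dividing them by `‖y^r‖` and passing to the limit gives `u R ≤ 0`.
Then `(y* + u, z*)` is dual feasible with the objective value of `(y*, z*)`, hence a second dual
optimum, contradicting uniqueness. -/

open Finset

open Filter Topology

lemma NetData.mem_Icc {J K : Type*} {A : K → J → ℝ} {JI : Finset J} {KI : Finset K}
    (hA : NetData A JI KI) (k : K) (j : J) : A k j ∈ Set.Icc (0 : ℝ) 1 := by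
  rcases hA.1 k j with h | h <;> simp [h]

section Dual

variable {I J K : Type*} [Fintype I] [Fintype K] [DecidableEq K]
  {R : I → J → ℝ} {A : K → J → ℝ} {JI : Finset J} {KI : Finset K} {y u : I → ℝ} {z : K → ℝ}

lemma Dfeas.sum_mul_le_one (h : Dfeas R A JI KI y z) (hA : ∀ k j, A k j ∈ Set.Icc (0 : ℝ) 1)
    (hz : ∀ k ∈ KI, 0 ≤ z k) (j : J) : ∑ i, y i * R i j ≤ 1 := by
  by_cases hj : j ∈ JI
  · refine (h.1 j hj).trans ?_
    have : 0 ≤ ∑ k ∈ KI, z k * A k j :=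
      sum_nonneg fun k hk => mul_nonneg (hz k hk) (hA k j).1
    linarith
  · calc ∑ i, y i * R i j ≤ ∑ k ∈ KIᶜ, z k * A k j := h.2.1 j hj
      _ ≤ ∑ k ∈ KIᶜ, z k := sum_le_sum fun k hk =>
          mul_le_of_le_one_right (h.2.2.2 k (mem_compl.1 hk)) (hA k j).2
      _ = 1 := h.2.2.1

lemma Dfeas.add_of_sum_mul_nonpos (h : Dfeas R A JI KI y z) (hu : ∀ j, ∑ i, u i * R i j ≤ 0) :
    Dfeas R A JI KI (y + u) z := by
  have hle : ∀ j, ∑ i, (y + u) i * R i j ≤ ∑ i, y i * R i j := fun j => by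
    simp only [Pi.add_apply, add_mul, sum_add_distrib]
    linarith [hu j]
  exact ⟨fun j hj => (hle j).trans (h.1 j hj), fun j hj => (hle j).trans (h.2.1 j hj), h.2.2⟩

lemma DuniqueOpt.eq_zero_of_sum_mul_nonpos (h : DuniqueOpt R A JI KI y z)
    (hu : ∀ j, ∑ i, u i * R i j ≤ 0) : u = 0 := by
  have hopt : Dopt R A JI KI (y + u) z := ⟨h.1.1.add_of_sum_mul_nonpos hu, h.1.2⟩
  simpa using (h.2 _ _ hopt).1

end Dual

lemma exists_strictMono_tendsto_inv_norm_smul_of_not_bddAbove {E : Type*} [NormedAddCommGroup E] [NormedSpace ℝ E]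
    [ProperSpace E] {y : ℕ → E} (hy : ¬ BddAbove (Set.range fun r => ‖y r‖)) :
    ∃ φ : ℕ → ℕ, StrictMono φ ∧ Tendsto (fun n => ‖y (φ n)‖) atTop atTop ∧
      ∃ u ≠ 0, Tendsto (fun n => ‖y (φ n)‖⁻¹ • y (φ n)) atTop (𝓝 u) := by
  have hfreq : ∀ n : ℕ, ∃ᶠ r in atTop, (n : ℝ) < ‖y r‖ := fun n => by
    by_contra h
    exact hy (isBoundedUnder_of_eventually_le (not_frequently.1 h |>.mono fun _ => not_lt.1)
      |>.bddAbove_range)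
  obtain ⟨φ, hφ, hφy⟩ := extraction_forall_of_frequently hfreq
  have hpos : ∀ n, 0 < ‖y (φ n)‖ := fun n => (Nat.cast_nonneg n).trans_lt (hφy n)
  have hsphere : ∀ n, ‖y (φ n)‖⁻¹ • y (φ n) ∈ Metric.sphere (0 : E) 1 := fun n => by
    simp [norm_smul, (hpos n).ne']
  obtain ⟨u, hu, ψ, hψ, hlim⟩ := (isCompact_sphere (0 : E) 1).tendsto_subseq hsphere
  refine ⟨φ ∘ ψ, hφ.comp hψ, ?_, u, ne_zero_of_mem_unit_sphere ⟨u, hu⟩, hlim⟩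
  exact tendsto_atTop_mono (fun n => (hφy (ψ n)).le)
    (tendsto_natCast_atTop_atTop.comp hψ.tendsto_atTop)

open Filter in
theorem dual_opt_bounded_general {I J K : Type*} [Fintype I] [Fintype K] [DecidableEq K]
    (R : I → J → ℝ) (A : K → J → ℝ) (JI : Finset J) (KI : Finset K)
    (hND : NetData A JI KI)
    (Rseq : ℕ → I → J → ℝ)
    (hconv : ∀ i j, Tendsto (fun r => Rseq r i j) atTop (nhds (R i j)))
    (yr : ℕ → I → ℝ) (zr : ℕ → K → ℝ)
    (hDr : ∀ r, DuniqueOpt (Rseq r) A JI KI (yr r) (zr r))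
    (hzrnn : ∀ r k, 0 ≤ zr r k)
    (ystar : I → ℝ) (zstar : K → ℝ) (hD : DuniqueOpt R A JI KI ystar zstar) :
    ∃ C : ℝ, ∀ r i, |yr r i| ≤ C := by
  suffices hbdd : BddAbove (Set.range fun r => ‖yr r‖) by
    obtain ⟨C, hC⟩ := hbdd
    exact ⟨C, fun r i => (norm_le_pi_norm (yr r) i).trans (hC ⟨r, rfl⟩)⟩
  by_contra hunb
  obtain ⟨φ, hφ, hnorm, u, hu, hdir⟩ := exists_strictMono_tendsto_inv_norm_smul_of_not_bddAbove hunb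
  refine hu (hD.eq_zero_of_sum_mul_nonpos fun j => ?_)
  have hlim : Tendsto (fun n => ∑ i, (‖yr (φ n)‖⁻¹ • yr (φ n)) i * Rseq (φ n) i j) atTop
      (𝓝 (∑ i, u i * R i j)) :=
    tendsto_finsetSum _ fun i _ =>
      ((continuous_apply i).tendsto u |>.comp hdir).mul ((hconv i j).comp hφ.tendsto_atTop)
  refine le_of_tendsto_of_tendsto' hlim hnorm.inv_tendsto_atTop fun n => ?_
  have hyR := (hDr (φ n)).1.1.sum_mul_le_one hND.mem_Icc (fun k _ => hzrnn (φ n) k) j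
  simp only [Pi.smul_apply, smul_eq_mul, mul_assoc, ← mul_sum]
  exact mul_le_of_le_one_right (inv_nonneg.2 (norm_nonneg _)) hyR

open Filter in
/-- Part of the proof of Lemma 1: the dual optimal vectors `y^r` form a bounded
sequence. -/
theorem dual_opt_bounded {I J K : Type*} [Fintype I] [Fintype J] [Fintype K] [DecidableEq J] [DecidableEq K]
    (R : I → J → ℝ) (A : K → J → ℝ) (JI : Finset J) (KI : Finset K)
    (hND : NetData A JI KI)
    (Rseq : ℕ → I → J → ℝ)
    (hconv : ∀ i j, Tendsto (fun r => Rseq r i j) atTop (nhds (R i j)))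
    (xstar : J → ℝ) (hSPP : SPPuniqueOpt R A KI 1 xstar)
    (yr : ℕ → I → ℝ) (zr : ℕ → K → ℝ)
    (hDr : ∀ r, DuniqueOpt (Rseq r) A JI KI (yr r) (zr r))
    (hyrnn : ∀ r i, 0 ≤ yr r i) (hzrnn : ∀ r k, 0 ≤ zr r k)
    (ystar : I → ℝ) (zstar : K → ℝ) (hD : DuniqueOpt R A JI KI ystar zstar)
    (hynn : ∀ i, 0 ≤ ystar i) (hznn : ∀ k, 0 ≤ zstar k) :
    ∃ C : ℝ, ∀ r i, |yr r i| ≤ C :=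
  dual_opt_bounded_general R A JI KI hND Rseq hconv yr zr hDr hzrnn ystar zstar hD
end
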